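/- For vector fields u ∈ H^{1,2}_0(O) on an open set O ⊂ ℝ², the L⁴ norm satisfies the Ladyzhenskaya inequality ‖u‖_{L⁴(O)} ≤ 2^{1/4} ‖u‖_{L²(O)}^{1/2} ‖∇u‖_{L²(O)}^{1/2}. -/

import Mathlib

/-!
Integrating the derivative of a compactly supported `C¹` function of one variable from both
ends gives `2 |f(s)| ≤ ∫ |f'|`. Applied to `w = |u|²` along the two coordinate lines through `x`,
this bounds `4 |u(x)|⁴` by the product of the two line integrals of `|∇w| ≤ 2 |u| |∇u|`; the
grid-lines (Loomis–Whitney) inequality in the plane bounds the integral of that product by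
`(∫ |∇w|)²`, and Cauchy–Schwarz gives `∫ |∇w| ≤ 2 ‖u‖₂ ‖∇u‖₂`. Altogether
`‖u‖₄² ≤ ‖u‖₂ ‖∇u‖₂`.
-/

open MeasureTheory

noncomputable abbrev E2 := EuclideanSpace ℝ (Fin 2)

/-- The `L^p(O)` norm of a vector field `u` on `O ⊆ ℝ²`. -/
noncomputable def LpN (O : Set E2) (u : E2 → E2) (p : ℝ) : ℝ :=
  (eLpNorm u (ENNReal.ofReal p) (volume.restrict O)).toReal

/-- The `L²(O)` norm of the (full) gradient of a vector field `u`. -/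
noncomputable def gradN2 (O : Set E2) (u : E2 → E2) : ℝ :=
  (eLpNorm (fun x => fderiv ℝ u x) 2 (volume.restrict O)).toReal

open Set Function
open scoped ENNReal

section OneVariable

variable {F : Type*} [NormedAddCommGroup F] [NormedSpace ℝ F] {f : ℝ → F}

theorem HasCompactSupport.enorm_le_lintegral_Ioi_deriv (hf : ContDiff ℝ 1 f)
    (h'f : HasCompactSupport f) (x : ℝ) : ‖f x‖ₑ ≤ ∫⁻ y in Ioi x, ‖deriv f y‖ₑ := by
  have h := HasCompactSupport.enorm_le_lintegral_Ici_deriv (f := fun y ↦ f (-y))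
    (hf.comp contDiff_neg) (h'f.comp_homeomorph (Homeomorph.neg ℝ)) (-x)
  simp only [neg_neg, deriv_comp_neg, enorm_neg] at h
  rwa [(Measure.measurePreserving_neg volume).setLIntegral_comp_emb
    (Homeomorph.neg ℝ).measurableEmbedding (fun y ↦ ‖deriv f y‖ₑ), image_neg_Iic, neg_neg,
    ← restrict_Ioi_eq_restrict_Ici] at h

theorem HasCompactSupport.two_mul_enorm_le_lintegral_deriv (hf : ContDiff ℝ 1 f)
    (h'f : HasCompactSupport f) (x : ℝ) : 2 * ‖f x‖ₑ ≤ ∫⁻ y, ‖deriv f y‖ₑ := by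
  rw [two_mul, ← lintegral_add_compl _ measurableSet_Iic, compl_Iic]
  exact add_le_add (h'f.enorm_le_lintegral_Ici_deriv hf x) (h'f.enorm_le_lintegral_Ioi_deriv hf x)

end OneVariable

section GridLines

variable {F : Type*} [NormedAddCommGroup F] [NormedSpace ℝ F]

theorem HasCompactSupport.two_mul_enorm_le_lintegral_fderiv_update {ι : Type*} [Fintype ι]
    [DecidableEq ι] {w : EuclideanSpace ℝ ι → F} (hw : ContDiff ℝ 1 w)
    (h2w : HasCompactSupport w) (x : ι → ℝ) (i : ι) :
    2 * ‖w (WithLp.toLp 2 x)‖ₑ ≤ ∫⁻ t, ‖fderiv ℝ w (WithLp.toLp 2 (update x i t))‖ₑ := by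
  let e := (EuclideanSpace.equiv ι ℝ).symm
  have h := (h2w.comp_isClosedEmbedding (e.toHomeomorph.isClosedEmbedding.comp
    (isClosedEmbedding_update x i))).two_mul_enorm_le_lintegral_deriv
    (hw.comp (e.contDiff.comp (contDiff_update 1 x i))) (x i)
  simp only [comp_apply, update_eq_self] at h
  refine h.trans (lintegral_mono fun t ↦ ?_)
  have hline : HasDerivAt (e ∘ update x i) (EuclideanSpace.single i 1) t :=
    e.hasFDerivAt.comp_hasDerivAt t (hasDerivAt_update x i t)
  have hunit : ‖EuclideanSpace.single i (1 : ℝ)‖ₑ = 1 := by simp [← ofReal_norm]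
  rw [((hw.differentiable one_ne_zero _).hasFDerivAt.comp_hasDerivAt t hline).deriv]
  exact ((fderiv ℝ w (e (update x i t))).le_opENorm_of_le hunit.le).trans_eq (mul_one _)

theorem HasCompactSupport.four_mul_lintegral_enorm_sq_le_lintegral_fderiv_sq
    {w : EuclideanSpace ℝ (Fin 2) → F} (hw : ContDiff ℝ 1 w) (h2w : HasCompactSupport w) :
    4 * ∫⁻ z, ‖w z‖ₑ ^ 2 ≤ (∫⁻ z, ‖fderiv ℝ w z‖ₑ) ^ 2 := by
  have hmp := PiLp.volume_preserving_toLp (Fin 2)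
  have hemb := (MeasurableEquiv.toLp 2 (Fin 2 → ℝ)).measurableEmbedding
  rw [← hmp.lintegral_comp_emb hemb, ← hmp.lintegral_comp_emb hemb]
  have hg : Measurable fun x : Fin 2 → ℝ ↦ ‖fderiv ℝ w (WithLp.toLp 2 x)‖ₑ :=
    ((hw.continuous_fderiv one_ne_zero).comp (PiLp.continuous_toLp 2 _)).enorm.measurable
  calc 4 * ∫⁻ x, ‖w (WithLp.toLp 2 x)‖ₑ ^ 2
      = ∫⁻ x, ∏ _i : Fin 2, 2 * ‖w (WithLp.toLp 2 x)‖ₑ := by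
        rw [← lintegral_const_mul' _ _ (by norm_num)]
        refine lintegral_congr fun x ↦ ?_
        rw [Fin.prod_univ_two]
        ring
    _ ≤ ∫⁻ x, ∏ i : Fin 2, ∫⁻ t, ‖fderiv ℝ w (WithLp.toLp 2 (update x i t))‖ₑ := by
        gcongr with x i
        exact h2w.two_mul_enorm_le_lintegral_fderiv_update hw x i
    _ ≤ (∫⁻ x, ‖fderiv ℝ w (WithLp.toLp 2 x)‖ₑ) ^ 2 := by
        have hgrid := lintegral_prod_lintegral_pow_le (fun _ ↦ volume) (p := 2)
          (by simpa using .two_two) hg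
        norm_num [Fin.prod_univ_two] at hgrid ⊢
        exact hgrid

end GridLines

theorem enorm_fderiv_norm_sq_le {E G : Type*} [NormedAddCommGroup E] [NormedSpace ℝ E]
    [NormedAddCommGroup G] [InnerProductSpace ℝ G] {u : E → G} {x : E}
    (hu : DifferentiableAt ℝ u x) :
    ‖fderiv ℝ (fun y ↦ ‖u y‖ ^ 2) x‖ₑ ≤ 2 * ‖u x‖ₑ * ‖fderiv ℝ u x‖ₑ := by
  have hinner : ‖innerSL ℝ (u x)‖ₑ = ‖u x‖ₑ := by
    simp only [← ofReal_norm, innerSL_apply_norm]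
  rw [hu.hasFDerivAt.norm_sq.fderiv, ← Nat.cast_smul_eq_nsmul ℝ, enorm_smul, Real.enorm_natCast,
    Nat.cast_ofNat, ← hinner, mul_assoc]
  gcongr
  exact ContinuousLinearMap.opENorm_comp_le _ _

theorem lintegral_enorm_mul_le_eLpNorm_two_mul {α E G : Type*} [MeasurableSpace α]
    {μ : Measure α} [NormedAddCommGroup E] [NormedAddCommGroup G] {f : α → E} {g : α → G}
    (hf : AEStronglyMeasurable f μ) (hg : AEStronglyMeasurable g μ) :
    ∫⁻ x, ‖f x‖ₑ * ‖g x‖ₑ ∂μ ≤ eLpNorm f 2 μ * eLpNorm g 2 μ := by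
  simpa [eLpNorm_eq_lintegral_rpow_enorm_toReal] using
    ENNReal.lintegral_mul_le_Lp_mul_Lq μ .two_two hf.enorm hg.enorm

theorem HasCompactSupport.eLpNorm_four_sq_le_eLpNorm_mul_eLpNorm_fderiv {G : Type*}
    [NormedAddCommGroup G] [InnerProductSpace ℝ G] {u : EuclideanSpace ℝ (Fin 2) → G}
    (hu : ContDiff ℝ 1 u) (h2u : HasCompactSupport u) :
    eLpNorm u 4 volume ^ 2 ≤ eLpNorm u 2 volume * eLpNorm (fderiv ℝ u) 2 volume := by
  set N := eLpNorm u 2 volume * eLpNorm (fderiv ℝ u) 2 volume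
  have hL4 : eLpNorm u 4 volume ^ 4 = ∫⁻ z, ‖‖u z‖ ^ 2‖ₑ ^ 2 := by
    simp only [enorm_pow, enorm_norm, ← pow_mul]
    simpa using eLpNorm_nnreal_pow_eq_lintegral (f := u) (μ := volume) (p := 4) (by norm_num)
  have hgrad : ∫⁻ z, ‖fderiv ℝ (fun y ↦ ‖u y‖ ^ 2) z‖ₑ ≤ 2 * N :=
    calc ∫⁻ z, ‖fderiv ℝ (fun y ↦ ‖u y‖ ^ 2) z‖ₑ ≤ ∫⁻ z, 2 * (‖u z‖ₑ * ‖fderiv ℝ u z‖ₑ) :=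
          lintegral_mono fun z ↦
            (enorm_fderiv_norm_sq_le (hu.differentiable one_ne_zero z)).trans_eq (mul_assoc _ _ _)
      _ = 2 * ∫⁻ z, ‖u z‖ₑ * ‖fderiv ℝ u z‖ₑ := lintegral_const_mul' _ _ (by norm_num)
      _ ≤ 2 * N := by
        gcongr
        exact lintegral_enorm_mul_le_eLpNorm_two_mul hu.continuous.aestronglyMeasurable
          (hu.continuous_fderiv one_ne_zero).aestronglyMeasurable
  have hsq_supp : HasCompactSupport fun y ↦ ‖u y‖ ^ 2 :=
    h2u.comp_left (g := fun y : G ↦ ‖y‖ ^ 2) (by simp)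
  rw [← ENNReal.pow_le_pow_left_iff two_ne_zero, ← pow_mul,
    ← ENNReal.mul_le_mul_iff_right (a := 4) (by norm_num) (by norm_num)]
  calc 4 * eLpNorm u 4 volume ^ (2 * 2) = 4 * ∫⁻ z, ‖‖u z‖ ^ 2‖ₑ ^ 2 := by rw [← hL4]
    _ ≤ (∫⁻ z, ‖fderiv ℝ (fun y ↦ ‖u y‖ ^ 2) z‖ₑ) ^ 2 :=
        hsq_supp.four_mul_lintegral_enorm_sq_le_lintegral_fderiv_sq (hu.norm_sq ℝ)
    _ ≤ (2 * N) ^ 2 := by gcongr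
    _ = 4 * N ^ 2 := by ring

theorem ladyzhenskaya_inequality_general
    (O : Set E2)
    (u : E2 → E2) (hu : ContDiff ℝ 1 u)
    (hcpt : HasCompactSupport u) (hsupp : tsupport u ⊆ O) :
    LpN O u 4 ≤ (2 : ℝ) ^ ((1:ℝ)/4) * (LpN O u 2) ^ ((1:ℝ)/2) * (gradN2 O u) ^ ((1:ℝ)/2) := by
  have hu_fin : eLpNorm u 2 volume ≠ ∞ :=
    (hu.continuous.memLp_of_hasCompactSupport hcpt).eLpNorm_ne_top
  have hdu_fin : eLpNorm (fderiv ℝ u) 2 volume ≠ ∞ :=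
    ((hu.continuous_fderiv one_ne_zero).memLp_of_hasCompactSupport
      (hcpt.fderiv ℝ)).eLpNorm_ne_top
  have hu_restrict (p : ℝ≥0∞) : eLpNorm u p (volume.restrict O) = eLpNorm u p volume :=
    eLpNorm_restrict_eq_of_support_subset ((subset_tsupport u).trans hsupp)
  have hdu_restrict :
      eLpNorm (fderiv ℝ u) 2 (volume.restrict O) = eLpNorm (fderiv ℝ u) 2 volume :=
    eLpNorm_restrict_eq_of_support_subset (f := fderiv ℝ u) ((support_fderiv_subset ℝ).trans hsupp)
  have hsq : (LpN O u 4) ^ 2 ≤ LpN O u 2 * gradN2 O u := by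
    rw [LpN, LpN, gradN2, ENNReal.ofReal_ofNat, ENNReal.ofReal_ofNat, hu_restrict, hu_restrict,
      hdu_restrict, ← ENNReal.toReal_pow, ← ENNReal.toReal_mul]
    exact ENNReal.toReal_mono (ENNReal.mul_ne_top hu_fin hdu_fin)
      (hcpt.eLpNorm_four_sq_le_eLpNorm_mul_eLpNorm_fderiv hu)
  have hL2 : 0 ≤ LpN O u 2 := ENNReal.toReal_nonneg
  have hgrad : 0 ≤ gradN2 O u := ENNReal.toReal_nonneg
  calc LpN O u 4 ≤ √(LpN O u 2 * gradN2 O u) := Real.le_sqrt_of_sq_le hsq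
    _ = (LpN O u 2) ^ ((1:ℝ)/2) * (gradN2 O u) ^ ((1:ℝ)/2) := by
        rw [Real.sqrt_eq_rpow, Real.mul_rpow hL2 hgrad]
    _ ≤ (2 : ℝ) ^ ((1:ℝ)/4) * (LpN O u 2) ^ ((1:ℝ)/2) * (gradN2 O u) ^ ((1:ℝ)/2) := by
        rw [mul_assoc]
        exact le_mul_of_one_le_left (by positivity) (Real.one_le_rpow (by norm_num) (by norm_num))

/-- **Ladyzhenskaya's inequality** on an open set `O ⊆ ℝ²`: for vector fields
`u ∈ H^{1,2}_0(O)` (here represented by `C¹` fields with compact support in `O`),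
`‖u‖_{L⁴(O)} ≤ 2^{1/4} ‖u‖_{L²(O)}^{1/2} ‖∇u‖_{L²(O)}^{1/2}`. -/
theorem ladyzhenskaya_inequality
    (O : Set E2) (hO : IsOpen O)
    (u : E2 → E2) (hu : ContDiff ℝ 1 u)
    (hcpt : HasCompactSupport u) (hsupp : tsupport u ⊆ O) :
    LpN O u 4 ≤ (2 : ℝ) ^ ((1:ℝ)/4) * (LpN O u 2) ^ ((1:ℝ)/2) * (gradN2 O u) ^ ((1:ℝ)/2) :=
  ladyzhenskaya_inequality_general O u hu hcpt hsupp
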